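/- arXiv:0710.2203 — 2 statements merged into one kernel-verified Lean document; each statement's English description precedes it below -/
import Mathlib

section
/- Let Γ be a group acting transitively on a set R, A an abelian group, and D ∈ R. For every group homomorphism φ : Γ_D → A there exists a 1-cocycle u : Γ × R → A such that u(h, D) = φ(h) for all h ∈ Γ_D. -/
/-- For a transitive action of `Γ` on `R` and `D ∈ R`, every group homomorphism
`φ : Γ_D → A` extends to a 1-cocycle `u : Γ × R → A` with `u(h, D) = φ(h)` for `h ∈ Γ_D`. -/
theorem stmt6 {Γ R A : Type*} [Group Γ] [MulAction Γ R] [AddCommGroup A]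
    (htrans : ∀ r r' : R, ∃ g : Γ, g • r = r') (D : R)
    (φ : MulAction.stabilizer Γ D → A)
    (hφ : ∀ g h : MulAction.stabilizer Γ D, φ (g * h) = φ g + φ h) :
    ∃ u : Γ → R → A,
      (∀ g₁ g₂ : Γ, ∀ r : R, u (g₁ * g₂) r = u g₁ r + u g₂ (g₁⁻¹ • r)) ∧
      ∀ h : MulAction.stabilizer Γ D, u (h : Γ) D = φ h := by
  classical
  -- choose a section s with s r • D = r
  have hsec : ∀ r : R, ∃ g : Γ, g • D = r := fun r => htrans D r
  choose s0 hs0 using hsec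
  set s : R → Γ := fun r => if r = D then 1 else s0 r with hs_def
  have hs : ∀ r : R, s r • D = r := by
    intro r
    by_cases h : r = D
    · simp [hs_def, h]
    · simp [hs_def, h, hs0 r]
  have hsD : s D = 1 := by simp [hs_def]
  -- key: for any g r, s r ⁻¹ * g * s (g⁻¹ • r) stabilizes D
  have hmem : ∀ (g : Γ) (r : R), (s r)⁻¹ * g * s (g⁻¹ • r) ∈ MulAction.stabilizer Γ D := by
    intro g r
    have : ((s r)⁻¹ * g * s (g⁻¹ • r)) • D = D := by
      rw [mul_smul, mul_smul, hs (g⁻¹ • r), smul_inv_smul, inv_smul_eq_iff, hs r]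
    exact this
  refine ⟨fun g r => φ ⟨(s r)⁻¹ * g * s (g⁻¹ • r), hmem g r⟩, ?_, ?_⟩
  · intro g₁ g₂ r
    have key : (⟨(s r)⁻¹ * (g₁ * g₂) * s ((g₁ * g₂)⁻¹ • r), hmem (g₁*g₂) r⟩ :
        MulAction.stabilizer Γ D) =
        ⟨(s r)⁻¹ * g₁ * s (g₁⁻¹ • r), hmem g₁ r⟩ *
        ⟨(s (g₁⁻¹ • r))⁻¹ * g₂ * s (g₂⁻¹ • g₁⁻¹ • r), hmem g₂ (g₁⁻¹ • r)⟩ := by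
      ext
      simp only [MulMemClass.coe_mul]
      rw [mul_inv_rev, mul_smul]
      group
    dsimp only
    rw [key, hφ]
  · intro h
    have : (⟨(s D)⁻¹ * (h : Γ) * s ((h : Γ)⁻¹ • D), hmem (h : Γ) D⟩ :
        MulAction.stabilizer Γ D) = h := by
      ext
      have hd : (h : Γ)⁻¹ • D = D := by
        rw [inv_smul_eq_iff, h.2]
      simp [hsD, hd]
    dsimp only
    rw [this]
end

section
/- Let G be a group and N a normal subgroup of finite index. The inclusion N → G induces a ℚ-linear map φ : ℚ ⊗_ℤ N_ab → ℚ ⊗_ℤ G_ab between the rationalized abelianizations. Then φ is surjective, and its kernel is the ℚ-submodule generated by the elements 1 ⊗ ([n] − [gng⁻¹]) for g ∈ G and n ∈ N; that is, φ induces an isomorphism from the G-coinvariants of ℚ ⊗_ℤ N_ab onto ℚ ⊗_ℤ G_ab. -/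
open scoped TensorProduct

/-!
Write `φ` for the map `ℚ ⊗ N_ab → ℚ ⊗ G_ab`. Every `g ∈ G` has a power `g ^ k`, `k ≥ 1`, in `N`,
so `1 ⊗ [g] = φ ((1 / k) ⊗ [g ^ k])` and `φ` is surjective. Conjugate elements of `N` have the same
class in `G_ab`, so the conjugation span lies in `ker φ`. Conversely, every factor in the transfer
`G → N_ab` of an element `n ∈ N` is a conjugate of a power of `n`; hence for a `G`-invariant
`ℚ`-linear `f` on `ℚ ⊗ N_ab` the transfer composed with `f` restricts to `[G : N] • f` on `N`, and
`[G : N]⁻¹ • (f ∘ transfer)` factors `f` through `φ`. Applied to the projection onto the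
coinvariants this gives `ker φ ≤` the conjugation span.
-/

theorem MonoidHom.transfer_coe_eq_pow_index {G : Type*} [Group G] {H : Subgroup G}
    [H.FiniteIndex] {A : Type*} [CommGroup A] (ϕ : H →* A)
    (hϕ : ∀ (g : G) (h : H) (hg : g⁻¹ * h * g ∈ H), ϕ ⟨g⁻¹ * h * g, hg⟩ = ϕ h) (h : H) :
    transfer ϕ h = ϕ h ^ H.index := by
  classical
  let := H.fintypeQuotientOfFiniteIndex
  rw [transfer_eq_prod_quotient_orbitRel_zpowers_quot, H.index_eq_sum_minimalPeriod (h : G),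
    ← Finset.prod_pow_eq_pow_sum]
  refine Fintype.prod_congr _ _ fun q => ?_
  have hmem := QuotientGroup.out_conj_pow_minimalPeriod_mem H (h : G) q.out
  rw [← map_pow, ← hϕ q.out.out (h ^ _) (by simpa using hmem)]
  rfl

theorem LinearMap.baseChange_rat_surjective_of_forall_nsmul_mem_range {M P : Type*}
    [AddCommGroup M] [AddCommGroup P] (f : M →ₗ[ℤ] P)
    (hf : ∀ p, ∃ n : ℕ, n ≠ 0 ∧ n • p ∈ LinearMap.range f) :
    Function.Surjective (f.baseChange ℚ) := by
  rw [← LinearMap.range_eq_top, eq_top_iff]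
  rintro x -
  induction x using TensorProduct.induction_on with
  | zero => exact zero_mem _
  | add x y hx hy => exact add_mem hx hy
  | tmul q p =>
    obtain ⟨n, hn, m, hm⟩ := hf p
    refine ⟨(q / n) ⊗ₜ m, ?_⟩
    rw [baseChange_tmul, hm, TensorProduct.tmul_smul, TensorProduct.smul_tmul', nsmul_eq_mul,
      mul_div_cancel₀ q (Nat.cast_ne_zero.mpr hn)]

namespace Subgroup

open TensorProduct

variable {G : Type*} [Group G] (H : Subgroup G)

noncomputable abbrev ratAbelianizationMap :
    ℚ ⊗[ℤ] Additive (Abelianization H) →ₗ[ℚ] ℚ ⊗[ℤ] Additive (Abelianization G) :=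
  (MonoidHom.toAdditive (Abelianization.map H.subtype)).toIntLinearMap.baseChange ℚ

/-- The kernel of the projection of `ℚ ⊗ H_ab` onto its `G`-coinvariants. -/
def ratAbelianizationCoinvariantsKer (hH : H.Normal) :
    Submodule ℚ (ℚ ⊗[ℤ] Additive (Abelianization H)) :=
  Submodule.span ℚ
    {x | ∃ (g : G) (h : H), x = (1 : ℚ) ⊗ₜ[ℤ] (Additive.ofMul (Abelianization.of h) -
      Additive.ofMul (Abelianization.of (⟨g * h * g⁻¹, hH.conj_mem h h.2 g⟩ : H)))}

theorem ratAbelianizationMap_tmul (q : ℚ) (h : H) :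
    H.ratAbelianizationMap (q ⊗ₜ .ofMul (.of h)) = q ⊗ₜ .ofMul (.of (h : G)) :=
  rfl

theorem ratAbelianizationMap_surjective [H.FiniteIndex] :
    Function.Surjective H.ratAbelianizationMap := by
  refine LinearMap.baseChange_rat_surjective_of_forall_nsmul_mem_range _ fun a => ?_
  obtain ⟨g, rfl⟩ := QuotientGroup.mk_surjective a.toMul
  obtain ⟨n, hn, -, hgn⟩ := H.exists_pow_mem_of_index_ne_zero FiniteIndex.index_ne_zero g
  exact ⟨n, hn.ne', .ofMul (.of ⟨g ^ n, hgn⟩), rfl⟩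

theorem exists_comp_ratAbelianizationMap_eq [H.FiniteIndex] {Q : Type*} [AddCommGroup Q]
    [Module ℚ Q] (f : ℚ ⊗[ℤ] Additive (Abelianization H) →ₗ[ℚ] Q)
    (hf : ∀ (g : G) (h : H) (hg : g⁻¹ * h * g ∈ H),
      f (1 ⊗ₜ .ofMul (.of ⟨g⁻¹ * h * g, hg⟩)) = f (1 ⊗ₜ .ofMul (.of h))) :
    ∃ T : ℚ ⊗[ℤ] Additive (Abelianization G) →ₗ[ℚ] Q, T ∘ₗ H.ratAbelianizationMap = f := by
  let χ : H →* Multiplicative Q :=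
    (AddMonoidHom.toMultiplicativeRight
      (f.toAddMonoidHom.comp (TensorProduct.mk ℤ ℚ _ 1).toAddMonoidHom)).comp Abelianization.of
  let τ : Additive (Abelianization G) →+ Q :=
    MonoidHom.toAdditiveLeft (Abelianization.lift (MonoidHom.transfer χ))
  refine ⟨(H.index⁻¹ : ℚ) • τ.toIntLinearMap.liftBaseChange ℚ, ?_⟩
  ext a
  obtain ⟨h, rfl⟩ := QuotientGroup.mk_surjective a.toMul
  have hτ : τ (.ofMul (.of (h : G))) = H.index • f (1 ⊗ₜ .ofMul (.of h)) :=
    congrArg Multiplicative.toAdd <| MonoidHom.transfer_coe_eq_pow_index χ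
      (fun g h hg => congrArg Multiplicative.ofAdd (hf g h hg)) h
  change (H.index⁻¹ : ℚ) • (1 : ℚ) • τ (.ofMul (.of (h : G))) = _
  rw [one_smul, hτ, ← Nat.cast_smul_eq_nsmul ℚ,
    inv_smul_smul₀ (Nat.cast_ne_zero.mpr FiniteIndex.index_ne_zero)]
  rfl

theorem ker_ratAbelianizationMap [H.FiniteIndex] (hH : H.Normal) :
    LinearMap.ker H.ratAbelianizationMap = H.ratAbelianizationCoinvariantsKer hH := by
  apply le_antisymm
  · obtain ⟨T, hT⟩ := H.exists_comp_ratAbelianizationMap_eq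
      (H.ratAbelianizationCoinvariantsKer hH).mkQ fun g h hg => by
        rw [← sub_eq_zero, ← map_sub, ← tmul_sub, Submodule.mkQ_apply,
          Submodule.Quotient.mk_eq_zero]
        refine Submodule.subset_span ⟨g, ⟨g⁻¹ * h * g, hg⟩, ?_⟩
        congr 4
        ext
        simp [mul_assoc]
    calc LinearMap.ker H.ratAbelianizationMap
        ≤ LinearMap.ker (T ∘ₗ H.ratAbelianizationMap) := LinearMap.ker_le_ker_comp _ _
      _ = H.ratAbelianizationCoinvariantsKer hH := by rw [hT, Submodule.ker_mkQ]
  · rw [ratAbelianizationCoinvariantsKer, Submodule.span_le]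
    rintro _ ⟨g, h, rfl⟩
    rw [SetLike.mem_coe, LinearMap.mem_ker, tmul_sub, map_sub, ratAbelianizationMap_tmul,
      ratAbelianizationMap_tmul, sub_eq_zero]
    congr 2
    change Abelianization.of h.1 = Abelianization.of (g * h * g⁻¹)
    rw [map_mul, map_mul, map_inv, mul_inv_cancel_comm]

end Subgroup

/-- For a normal subgroup `N` of finite index in `G`, the map
`ℚ ⊗ N_ab → ℚ ⊗ G_ab` induced by the inclusion is surjective, and its kernel is the
`ℚ`-submodule generated by the elements `1 ⊗ ([n] - [gng⁻¹])`; that is, it induces an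
isomorphism from the `G`-coinvariants of `ℚ ⊗ N_ab` onto `ℚ ⊗ G_ab`. -/
theorem stmt14 {G : Type*} [Group G] (N : Subgroup G) (hN : N.Normal)
    (hfin : N.FiniteIndex) :
    Function.Surjective
      ((MonoidHom.toAdditive (Abelianization.map N.subtype)).toIntLinearMap.baseChange ℚ) ∧
    LinearMap.ker
        ((MonoidHom.toAdditive (Abelianization.map N.subtype)).toIntLinearMap.baseChange ℚ)
      = Submodule.span ℚ
          {x : ℚ ⊗[ℤ] Additive (Abelianization N) |
            ∃ (g : G) (n : N), x = (1 : ℚ) ⊗ₜ[ℤ]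
              (Additive.ofMul (Abelianization.of n) -
               Additive.ofMul (Abelianization.of
                 (⟨g * (n : G) * g⁻¹, hN.conj_mem (n : G) n.2 g⟩ : N)))} :=
  ⟨N.ratAbelianizationMap_surjective, N.ker_ratAbelianizationMap hN⟩
end
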